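/- arXiv:math/9812105 — 2 statements merged into one kernel-verified Lean document; each statement's English description precedes it below -/
import Mathlib

section
/- For the composition α of 3 given by parts (1,2) (i.e., 3 labeled vertices partitioned into a 1-clump and a 2-clump), the weighted count T^1_α of connected loopless genus-1 graphs whose restriction to each clump spans a tree on the clump equals 4, where each graph is counted with weight 1/|Aut|. -/
variable {ι : Type} [Fintype ι] [DecidableEq ι]

/-- The vertex set: `d` labeled vertices partitioned into clumps of sizes `α i`. -/
abbrev ClumpV (α : ι → ℕ) : Type := Σ i : ι, Fin (α i)

/-- The loopless simple graph underlying a multigraph given by an edge-multiplicity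
function `m` on unordered pairs of vertices. -/
def mGraph {α : ι → ℕ} (m : Sym2 (ClumpV α) → ℕ) : SimpleGraph (ClumpV α) :=
  SimpleGraph.fromRel (fun u v => m s(u, v) ≠ 0)

/-- The set of pairs `(m, t)` where `m` is the edge-multiplicity function of a connected
loopless multigraph of genus 1 (number of edges = number of vertices) on the `d` vertices,
and `t` designates a set of `d - n` edges of it forming spanning trees on each of the
clumps. -/
def T1Set (α : ι → ℕ) :
    Set ((Sym2 (ClumpV α) → ℕ) × (Sym2 (ClumpV α) → ℕ)) :=
  { p | (∀ v : ClumpV α, p.1 s(v, v) = 0) ∧          -- loopless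
        (∀ e, p.2 e ≤ p.1 e) ∧                        -- designated edges are edges
        (∀ e, p.2 e ≤ 1) ∧                            -- each pair designated at most once
        (∑ e : Sym2 (ClumpV α), p.1 e) = Fintype.card (ClumpV α) ∧  -- genus 1 : E = V
        (mGraph p.1).Connected ∧                       -- connected
        (∀ u v : ClumpV α, u.1 ≠ v.1 → p.2 s(u, v) = 0) ∧  -- designated edges lie in clumps
        (∀ i : ι, ((mGraph p.2).induce {v : ClumpV α | v.1 = i}).IsTree) }
        -- designated edges span a tree on each clump

/-- The weight `1/|Aut|` of such a multigraph with designated edges: automorphisms fix all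
vertices, so `|Aut| = ∏_e (m e - t e)!` (permutations of undesignated parallel edges). -/
noncomputable def T1wt (α : ι → ℕ)
    (p : (Sym2 (ClumpV α) → ℕ) × (Sym2 (ClumpV α) → ℕ)) : ℚ :=
  ∏ e : Sym2 (ClumpV α), (1 : ℚ) / (Nat.factorial (p.1 e - p.2 e))

/-- `T1 α` : the `1/|Aut|`-weighted number of connected loopless genus-1 multigraphs on the
`d` labeled vertices together with a designated set of `d - n` edges forming spanning trees
on each of the clumps. -/
noncomputable def T1 (α : ι → ℕ) : ℚ := ∑ᶠ p ∈ T1Set α, T1wt α p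

/-! The designated tree on the 2-clump `{vb, vc}` can only be the edge `vb vc`. A loopless
multigraph on the three vertices is then given by the multiplicities `(x, y, z)` of
`va vb`, `va vc`, `vb vc`, with `x + y + z = 3`, `z ≥ 1` (the designated edge) and `x + y ≥ 1`
(connectivity). The five solutions `(1,0,2), (0,1,2), (2,0,1), (0,2,1), (1,1,1)` have weights
`1 / (x! y! (z-1)!) = 1, 1, 1/2, 1/2, 1`, which add up to `4`. -/

open scoped Nat

theorem mGraph_adj {ι : Type} {α : ι → ℕ} (m : Sym2 (ClumpV α) → ℕ) {u v : ClumpV α} :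
    (mGraph m).Adj u v ↔ u ≠ v ∧ m s(u, v) ≠ 0 := by
  simp [mGraph, Sym2.eq_swap]

instance {ι : Type} [DecidableEq ι] {α : ι → ℕ} (m : Sym2 (ClumpV α) → ℕ) :
    DecidableRel (mGraph m).Adj :=
  fun _ _ => decidable_of_iff _ (mGraph_adj m).symm

def va : ClumpV ![1, 2] := ⟨0, ⟨0, by decide⟩⟩
def vb : ClumpV ![1, 2] := ⟨1, ⟨0, by decide⟩⟩
def vc : ClumpV ![1, 2] := ⟨1, ⟨1, by decide⟩⟩

theorem clumpV_one_two_cases : ∀ v : ClumpV ![1, 2], v = va ∨ v = vb ∨ v = vc := by decide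

theorem univ_sym2_clumpV_one_two : (Finset.univ : Finset (Sym2 (ClumpV ![1, 2]))) =
    {s(va, va), s(vb, vb), s(vc, vc), s(va, vb), s(va, vc), s(vb, vc)} := by decide

def triMult (x y z : ℕ) (e : Sym2 (ClumpV ![1, 2])) : ℕ :=
  if e = s(va, vb) then x else if e = s(va, vc) then y else if e = s(vb, vc) then z else 0

section triMult

variable (x y z : ℕ)

@[simp] theorem triMult_diag (v : ClumpV ![1, 2]) : triMult x y z s(v, v) = 0 := by
  rcases clumpV_one_two_cases v with rfl | rfl | rfl <;> rfl

@[simp] theorem triMult_ab : triMult x y z s(va, vb) = x := rfl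
@[simp] theorem triMult_ac : triMult x y z s(va, vc) = y := rfl
@[simp] theorem triMult_bc : triMult x y z s(vb, vc) = z := rfl

end triMult

theorem eq_triMult_of_loopless {m : Sym2 (ClumpV ![1, 2]) → ℕ} (hloop : ∀ v, m s(v, v) = 0) :
    m = triMult (m s(va, vb)) (m s(va, vc)) (m s(vb, vc)) := by
  funext e
  induction e using Sym2.ind with
  | _ u v =>
    rcases clumpV_one_two_cases u with rfl | rfl | rfl <;>
      rcases clumpV_one_two_cases v with rfl | rfl | rfl <;>
      first | exact hloop _ | rfl | (rw [Sym2.eq_swap]; rfl)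

theorem triMult_injective : Function.Injective fun w : ℕ × ℕ × ℕ => triMult w.1 w.2.1 w.2.2 :=
  fun _ _ h =>
    Prod.ext (congrFun h s(va, vb)) (Prod.ext (congrFun h s(va, vc)) (congrFun h s(vb, vc)))

theorem sum_triMult (x y z : ℕ) : ∑ e, triMult x y z e = x + y + z := by
  simp +decide [univ_sym2_clumpV_one_two, Finset.sum_insert, add_assoc]

theorem T1wt_triMult (x y z : ℕ) :
    T1wt ![1, 2] (triMult x y z, triMult 0 0 1) = 1 / (x ! * y ! * (z - 1)! : ℚ) := by
  simp +decide [T1wt, univ_sym2_clumpV_one_two, Finset.prod_insert, mul_assoc]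

theorem connected_mGraph_triMult_iff {x y z : ℕ} (hz : z ≠ 0) :
    (mGraph (triMult x y z)).Connected ↔ x ≠ 0 ∨ y ≠ 0 := by
  constructor
  · intro h
    obtain ⟨w, hw⟩ := (h.preconnected va vb).nonempty_neighborSet_left (by decide)
    rw [SimpleGraph.mem_neighborSet, mGraph_adj] at hw
    rcases clumpV_one_two_cases w with rfl | rfl | rfl
    · exact absurd rfl hw.1
    · exact Or.inl hw.2
    · exact Or.inr hw.2
  · intro hxy
    have hbc : (mGraph (triMult x y z)).Reachable vb vc :=
      ((mGraph_adj _).2 ⟨by decide, hz⟩).reachable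
    have hab : (mGraph (triMult x y z)).Reachable va vb := by
      rcases hxy with hx | hy
      · exact ((mGraph_adj _).2 ⟨by decide, hx⟩).reachable
      · exact ((mGraph_adj _).2 ⟨by decide, hy⟩).reachable.trans hbc.symm
    refine SimpleGraph.connected_iff_exists_forall_reachable _ |>.2 ⟨vb, fun w => ?_⟩
    rcases clumpV_one_two_cases w with rfl | rfl | rfl
    exacts [hab.symm, .rfl, hbc]

theorem triMult_le_triMult {x y z x' y' z' : ℕ} (hx : x ≤ x') (hy : y ≤ y') (hz : z ≤ z')
    (e : Sym2 (ClumpV ![1, 2])) : triMult x y z e ≤ triMult x' y' z' e := by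
  unfold triMult
  split_ifs <;> omega

theorem triMult_le {x y z n : ℕ} (hx : x ≤ n) (hy : y ≤ n) (hz : z ≤ n)
    (e : Sym2 (ClumpV ![1, 2])) : triMult x y z e ≤ n := by
  unfold triMult
  split_ifs <;> omega

theorem triMult_001_eq_zero_of_ne {u v : ClumpV ![1, 2]} (h : u.1 ≠ v.1) :
    triMult 0 0 1 s(u, v) = 0 := by
  rcases clumpV_one_two_cases u with rfl | rfl | rfl <;>
    rcases clumpV_one_two_cases v with rfl | rfl | rfl <;>
    first | exact absurd rfl h | rfl

theorem isTree_induce_triMult_001 (i : Fin 2) :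
    ((mGraph (triMult 0 0 1)).induce {v : ClumpV ![1, 2] | v.1 = i}).IsTree :=
  ⟨by fin_cases i <;> decide, .of_card_le_two <| by
    rw [ENat.card_eq_coe_fintype_card, Nat.cast_le_ofNat]; fin_cases i <;> decide⟩

theorem eq_triMult_001_of_connected {t : Sym2 (ClumpV ![1, 2]) → ℕ}
    (hloop : ∀ v, t s(v, v) = 0) (hle : ∀ e, t e ≤ 1)
    (hcross : ∀ u v : ClumpV ![1, 2], u.1 ≠ v.1 → t s(u, v) = 0)
    (hconn : ((mGraph t).induce {v : ClumpV ![1, 2] | v.1 = 1}).Connected) :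
    t = triMult 0 0 1 := by
  have hbc : t s(vb, vc) ≠ 0 := by
    obtain ⟨⟨w, hw⟩, hadj⟩ :=
      (hconn.preconnected ⟨vb, rfl⟩ ⟨vc, rfl⟩).nonempty_neighborSet_left (by decide)
    rw [SimpleGraph.mem_neighborSet, SimpleGraph.comap_adj, mGraph_adj] at hadj
    rcases clumpV_one_two_cases w with rfl | rfl | rfl
    · exact absurd hw (by decide)
    · exact absurd rfl hadj.1
    · exact hadj.2
  rw [eq_triMult_of_loopless hloop, hcross va vb (by decide), hcross va vc (by decide),
    le_antisymm (hle _) (Nat.one_le_iff_ne_zero.2 hbc)]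

theorem mem_T1Set_one_two_iff {p : (Sym2 (ClumpV ![1, 2]) → ℕ) × (Sym2 (ClumpV ![1, 2]) → ℕ)} :
    p ∈ T1Set ![1, 2] ↔ ∃ x y z : ℕ, x + y + z = 3 ∧ z ≠ 0 ∧ (x ≠ 0 ∨ y ≠ 0) ∧
      p = (triMult x y z, triMult 0 0 1) := by
  have hcard : Fintype.card (ClumpV ![1, 2]) = 3 := rfl
  constructor
  · rintro ⟨hloop, hle, hle_one, hsum, hconn, hcross, htree⟩
    have ht := eq_triMult_001_of_connected
      (fun v => Nat.le_zero.1 ((hle _).trans_eq (hloop v))) hle_one hcross (htree 1).connected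
    have hm := eq_triMult_of_loopless hloop
    have hz : p.1 s(vb, vc) ≠ 0 :=
      Nat.one_le_iff_ne_zero.1 (by simpa [ht] using hle s(vb, vc))
    rw [hm, sum_triMult, hcard] at hsum
    rw [hm, connected_mGraph_triMult_iff hz] at hconn
    exact ⟨_, _, _, hsum, hz, hconn, Prod.ext hm ht⟩
  · rintro ⟨x, y, z, hsum, hz, hxy, rfl⟩
    refine ⟨triMult_diag x y z, triMult_le_triMult (Nat.zero_le x) (Nat.zero_le y)
      (Nat.one_le_iff_ne_zero.2 hz), triMult_le zero_le_one zero_le_one le_rfl,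
      ?_, (connected_mGraph_triMult_iff hz).2 hxy, fun _ _ => triMult_001_eq_zero_of_ne,
      isTree_induce_triMult_001⟩
    rw [sum_triMult, hsum, hcard]

theorem T1Set_one_two : T1Set ![1, 2] =
    (fun w : ℕ × ℕ × ℕ => (triMult w.1 w.2.1 w.2.2, triMult 0 0 1)) ''
      ↑({(1, 0, 2), (0, 1, 2), (2, 0, 1), (0, 2, 1), (1, 1, 1)} : Finset (ℕ × ℕ × ℕ)) := by
  ext p
  simp only [mem_T1Set_one_two_iff, Set.mem_image, Finset.coe_insert, Finset.coe_singleton,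
    Set.mem_insert_iff, Set.mem_singleton_iff, Prod.exists, Prod.mk.injEq]
  constructor
  · rintro ⟨x, y, z, hsum, hz, hxy, rfl⟩
    exact ⟨x, y, z, by omega, rfl⟩
  · rintro ⟨x, y, z, hw, rfl⟩
    exact ⟨x, y, z, by omega, by omega, by omega, rfl⟩

/-- For the composition `(1,2)` of `3` (a 1-clump and a 2-clump), the weighted count
`T^1_α` of connected loopless genus-1 graphs with designated spanning trees on the clumps
equals `4`. -/
theorem T1_one_two : T1 ![1, 2] = 4 := by
  rw [T1, T1Set_one_two, finsum_mem_image fun _ _ _ _ h => triMult_injective (congrArg Prod.fst h),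
    finsum_mem_coe_finset]
  norm_num [T1wt_triMult, Nat.factorial]
end

section
/- Let α be a composition of d. Define G̃^0_α = r^0_α! T^0_α/(d ∏(α_i-1)!) with T^0_α = d^{l(α)-2}∏α_i^{α_i-1} and r^0_α = d + l(α) - 2. Then G̃^0 satisfies the recursion G̃^0_α = (r^0_α - 1) Σ_{α=β⊔γ} (i²j²/d) G̃^0_β G̃^0_γ · C(r^0_α−2, r^0_β) + Σ (α_k/2) C(r^0_α−1, r^0_β) (ij/d) G̃^0_β G̃^0_γ, where the first sum is over splittings of the parts of α into nonempty labeled sub-compositions β (of size i) and γ (of size j), and the second sum is over parts α_k, decompositions α_k = p + q with p,q ≥ 1 and C(α_k, p) distributions of the labeled vertices, replacing α_k by p and q and splitting the resulting parts into β ∋ p (of size i) and γ ∋ q (of size j). -/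
/-- `r⁰_α = d + l(α) - 2` for a composition `α` of `d`. -/
def r0 {ι : Type} [Fintype ι] (α : ι → ℕ) : ℕ :=
  (∑ i, α i) + Fintype.card ι - 2

/-- The closed form `G̃⁰_α = r⁰_α! T⁰_α/(d ∏ (α_i - 1)!)` with
`T⁰_α = d^{l(α)-2} ∏ α_i^{α_i-1}`. -/
noncomputable def Gt {ι : Type} [Fintype ι] (α : ι → ℕ) : ℚ :=
  (Nat.factorial (r0 α) : ℚ) *
      ((∑ i, α i : ℕ) : ℚ) ^ ((Fintype.card ι : ℤ) - 2) * (∏ i, (α i : ℚ) ^ (α i - 1)) /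
    (((∑ i, α i : ℕ) : ℚ) * ∏ i, (Nat.factorial (α i - 1) : ℚ))

section CoreIdentities

open Finset Polynomial

variable {ι : Type} [DecidableEq ι]


lemma insert_injOn_powerset {t : ι} {A' : Finset ι} (ht : t ∉ A') :
    ∀ S ∈ A'.powerset, ∀ T ∈ A'.powerset, insert t S = insert t T → S = T := by
  intro S hS T hT hST
  simp only [mem_powerset] at hS hT
  have hts : t ∉ S := fun h => ht (hS h)
  have htt : t ∉ T := fun h => ht (hT h)
  rw [← erase_insert hts, hST, erase_insert htt]

lemma powerset_insert_disjoint {t : ι} {A' : Finset ι} (ht : t ∉ A') :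
    Disjoint A'.powerset (A'.powerset.image (insert t)) := by
  rw [disjoint_left]
  intro S hS hS2
  simp only [mem_powerset] at hS
  simp only [mem_image, mem_powerset] at hS2
  obtain ⟨T, hT, rfl⟩ := hS2
  exact ht (hS (mem_insert_self t T))

/-- Finite difference lemma: alternating sum of a polynomial of degree < |A| over subset sums. -/
lemma FD (a : ι → ℚ) : ∀ (A : Finset ι), A.Nonempty → ∀ m : ℕ, m < A.card → ∀ z : ℚ,
    ∑ S ∈ A.powerset, (-1 : ℚ) ^ S.card * (z + ∑ i ∈ S, a i) ^ m = 0 := by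
  intro A
  induction A using Finset.induction_on with
  | empty => intro h; exact absurd rfl h.ne_empty
  | @insert t A' ht IH =>
    intro _ m hm z
    rw [powerset_insert, sum_union (powerset_insert_disjoint ht),
      sum_image (insert_injOn_powerset ht)]
    by_cases hA' : A' = ∅
    · subst hA'
      rw [card_insert_of_notMem ht] at hm
      have hm0 : m = 0 := by simpa using hm
      subst hm0
      simp [ht]
    · have hA'' : A'.Nonempty := nonempty_iff_ne_empty.mpr hA'
      have hmc : m ≤ A'.card := by
        rw [card_insert_of_notMem ht] at hm; omega
      have key : ∀ S ∈ A'.powerset, (-1:ℚ)^S.card * (z + ∑ i ∈ S, a i) ^ m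
          + (-1:ℚ)^(insert t S).card * (z + ∑ i ∈ insert t S, a i) ^ m
          = ∑ j ∈ Finset.range m, -(((m.choose j : ℚ) * (a t)^(m - j)) *
              ((-1:ℚ)^S.card * (z + ∑ i ∈ S, a i) ^ j)) := by
        intro S hS
        simp only [mem_powerset] at hS
        have hts : t ∉ S := fun h => ht (hS h)
        rw [card_insert_of_notMem hts, sum_insert hts, pow_succ]
        have expand : (z + (a t + ∑ i ∈ S, a i)) ^ m
            = ∑ j ∈ Finset.range (m+1), (z + ∑ i ∈ S, a i)^j * (a t)^(m-j) * (m.choose j : ℚ) := by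
          rw [show z + (a t + ∑ i ∈ S, a i) = (z + ∑ i ∈ S, a i) + a t by ring]
          exact add_pow _ _ m
        rw [expand, Finset.sum_range_succ]
        simp only [Nat.sub_self, pow_zero, Nat.choose_self, Nat.cast_one]
        rw [show (-1:ℚ)^S.card * (z + ∑ i ∈ S, a i)^m + (-1:ℚ)^S.card * -1 *
            ((∑ j ∈ Finset.range m, (z + ∑ i ∈ S, a i)^j * (a t)^(m-j) * (m.choose j:ℚ))
              + (z + ∑ i ∈ S, a i)^m * 1 * 1)
            = -((-1:ℚ)^S.card * ∑ j ∈ Finset.range m,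
                (z + ∑ i ∈ S, a i)^j * (a t)^(m-j) * (m.choose j:ℚ)) from by ring]
        rw [Finset.mul_sum, ← Finset.sum_neg_distrib]
        exact Finset.sum_congr rfl fun j _ => by ring
      rw [← Finset.sum_add_distrib, Finset.sum_congr rfl key, Finset.sum_comm]
      refine Finset.sum_eq_zero fun j hj => ?_
      rw [Finset.sum_neg_distrib, ← Finset.mul_sum,
        IH hA'' j (lt_of_lt_of_le (mem_range.mp hj) hmc) z, mul_zero, neg_zero]

/-- The Abel "rooted forest" term: `P x S = x (x + σ_S)^{|S|-1}`, with `P x ∅ = 1`. -/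
noncomputable def Pf (a : ι → ℚ) (x : ℚ) (S : Finset ι) : ℚ :=
  if S = ∅ then 1 else x * (x + ∑ i ∈ S, a i) ^ (S.card - 1)

lemma Pf_empty (a : ι → ℚ) (x : ℚ) : Pf a x ∅ = 1 := if_pos rfl

lemma Pf_of_ne (a : ι → ℚ) (x : ℚ) {S : Finset ι} (h : S ≠ ∅) :
    Pf a x S = x * (x + ∑ i ∈ S, a i) ^ (S.card - 1) := if_neg h

/-- The Hurwitz–Abel identity H1 (polynomial form in the second variable). -/
lemma H1poly (a : ι → ℚ) : ∀ (A : Finset ι) (x c : ℚ),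
    ∑ S ∈ A.powerset, Polynomial.C (Pf a x S) *
        (Polynomial.X + Polynomial.C (c + ∑ i ∈ A \ S, a i)) ^ (A \ S).card
      = (Polynomial.X + Polynomial.C (x + c + ∑ i ∈ A, a i)) ^ A.card := by
  intro A
  induction A using Finset.strongInduction with
  | _ A IH =>
    intro x c
    rcases eq_or_ne A ∅ with rfl | hA
    · simp [Pf_empty]
    · have hAne : A.Nonempty := nonempty_iff_ne_empty.mpr hA
      set L : Polynomial ℚ := ∑ S ∈ A.powerset, Polynomial.C (Pf a x S) *
          (Polynomial.X + Polynomial.C (c + ∑ i ∈ A \ S, a i)) ^ (A \ S).card with hL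
      set R : Polynomial ℚ := (Polynomial.X + Polynomial.C (x + c + ∑ i ∈ A, a i)) ^ A.card with hR
      -- derivatives agree
      have hder : Polynomial.derivative L = Polynomial.derivative R := by
        have hdL : Polynomial.derivative L = ∑ k ∈ A, ∑ S ∈ (A.erase k).powerset,
            Polynomial.C (Pf a x S) *
              (Polynomial.X + Polynomial.C ((c + a k) + ∑ i ∈ (A.erase k) \ S, a i)) ^ ((A.erase k) \ S).card := by
          rw [hL, map_sum]
          have step : ∀ S ∈ A.powerset, Polynomial.derivative (Polynomial.C (Pf a x S) *
              (Polynomial.X + Polynomial.C (c + ∑ i ∈ A \ S, a i)) ^ (A \ S).card)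
              = ∑ k ∈ A \ S, Polynomial.C (Pf a x S) *
                (Polynomial.X + Polynomial.C ((c + a k) + ∑ i ∈ (A.erase k) \ S, a i)) ^ ((A.erase k) \ S).card := by
            intro S hS
            have each : ∀ k ∈ A \ S, Polynomial.C (Pf a x S) *
                (Polynomial.X + Polynomial.C ((c + a k) + ∑ i ∈ (A.erase k) \ S, a i)) ^ ((A.erase k) \ S).card
                = Polynomial.C (Pf a x S) *
                  (Polynomial.X + Polynomial.C (c + ∑ i ∈ A \ S, a i)) ^ ((A \ S).card - 1) := by
              intro k hk
              have hkA : k ∈ A := (mem_sdiff.mp hk).1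
              have hkS : k ∉ S := (mem_sdiff.mp hk).2
              have h1 : (A.erase k) \ S = (A \ S).erase k := by
                ext y; simp only [mem_sdiff, mem_erase]; tauto
              have h2 : ((A.erase k) \ S).card = (A \ S).card - 1 := by
                rw [h1, card_erase_of_mem hk]
              have h3 : (c + a k) + ∑ i ∈ (A.erase k) \ S, a i = c + ∑ i ∈ A \ S, a i := by
                rw [h1, add_assoc, Finset.add_sum_erase _ _ hk]
              rw [h2, h3]
            rw [Finset.sum_congr rfl each, Finset.sum_const,
              Polynomial.derivative_C_mul, Polynomial.derivative_pow, Polynomial.derivative_add,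
              Polynomial.derivative_X, Polynomial.derivative_C, add_zero, mul_one,
              nsmul_eq_mul, Polynomial.C_eq_natCast]
            ring
          rw [Finset.sum_congr rfl step]
          -- swap the sums
          rw [Finset.sum_sigma', Finset.sum_sigma']
          refine Finset.sum_nbij' (fun p => ⟨p.2, p.1⟩) (fun p => ⟨p.2, p.1⟩) ?_ ?_ ?_ ?_ ?_
          · rintro ⟨S, k⟩ h
            simp only [Finset.mem_sigma, mem_powerset, mem_sdiff] at h ⊢
            obtain ⟨hS, hkA, hkS⟩ := h
            exact ⟨hkA, fun y hy => mem_erase.mpr ⟨fun hyk => hkS (hyk ▸ hy), hS hy⟩⟩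
          · rintro ⟨k, S⟩ h
            simp only [Finset.mem_sigma, mem_powerset, mem_sdiff] at h ⊢
            obtain ⟨hk, hS⟩ := h
            refine ⟨fun y hy => (mem_erase.mp (hS hy)).2, hk, fun hkS => (mem_erase.mp (hS hkS)).1 rfl⟩
          · rintro ⟨S, k⟩ _; rfl
          · rintro ⟨k, S⟩ _; rfl
          · rintro ⟨S, k⟩ _; rfl
        rw [hdL]
        have hsub : ∀ k ∈ A, ∑ S ∈ (A.erase k).powerset,
            Polynomial.C (Pf a x S) *
              (Polynomial.X + Polynomial.C ((c + a k) + ∑ i ∈ (A.erase k) \ S, a i)) ^ ((A.erase k) \ S).card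
            = (Polynomial.X + Polynomial.C (x + c + ∑ i ∈ A, a i)) ^ (A.card - 1) := by
          intro k hk
          rw [IH (A.erase k) (erase_ssubset hk) x (c + a k)]
          have harg : x + (c + a k) + ∑ i ∈ A.erase k, a i = x + c + ∑ i ∈ A, a i := by
            rw [← Finset.add_sum_erase _ a hk]; ring
          rw [harg, card_erase_of_mem hk]
        rw [Finset.sum_congr rfl hsub, Finset.sum_const, hR, Polynomial.derivative_pow,
          Polynomial.derivative_add, Polynomial.derivative_X, Polynomial.derivative_C,
          add_zero, mul_one, nsmul_eq_mul]
        norm_cast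
      -- equal at a point
      have heval : L.eval (-(x + c + ∑ i ∈ A, a i)) = R.eval (-(x + c + ∑ i ∈ A, a i)) := by
        rw [hR]
        simp only [Polynomial.eval_pow, Polynomial.eval_add, Polynomial.eval_X, Polynomial.eval_C]
        rw [neg_add_cancel, zero_pow (by simpa using hAne.card_pos.ne')]
        rw [hL]
        simp only [Polynomial.eval_finset_sum, Polynomial.eval_mul, Polynomial.eval_pow,
          Polynomial.eval_add, Polynomial.eval_X, Polynomial.eval_C]
        have hterm : ∀ S ∈ A.powerset,
            Pf a x S * (-(x + c + ∑ i ∈ A, a i) + (c + ∑ i ∈ A \ S, a i)) ^ (A \ S).card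
            = ((-1)^A.card * x) * ((-1:ℚ)^S.card * (x + ∑ i ∈ S, a i) ^ (A.card - 1)) := by
          intro S hS
          rw [mem_powerset] at hS
          have hsplit : ∑ i ∈ A, a i = (∑ i ∈ S, a i) + ∑ i ∈ A \ S, a i := by
            rw [← Finset.sum_union disjoint_sdiff, Finset.union_sdiff_of_subset hS]
          have hbase : -(x + c + ∑ i ∈ A, a i) + (c + ∑ i ∈ A \ S, a i)
              = -(x + ∑ i ∈ S, a i) := by rw [hsplit]; ring
          have h4 : (A \ S).card + S.card = A.card := by
            rw [card_sdiff_of_subset hS]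
            have := card_le_card hS
            omega
          have hsign : (-1:ℚ) ^ (A \ S).card = (-1)^A.card * (-1)^S.card :=
            calc (-1:ℚ)^(A \ S).card
                = (-1)^(A \ S).card * ((-1:ℚ)^S.card * (-1)^S.card) := by
                  rw [← pow_add, ← two_mul, pow_mul]; norm_num
              _ = (-1)^A.card * (-1)^S.card := by
                  rw [← mul_assoc, ← pow_add, h4]
          have hPf : Pf a x S * (x + ∑ i ∈ S, a i) ^ (A \ S).card
              = x * (x + ∑ i ∈ S, a i) ^ (A.card - 1) := by
            rcases eq_or_ne S ∅ with rfl | hSne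
            · rw [Pf_empty, one_mul, Finset.sum_empty, sdiff_empty, add_zero]
              conv_lhs => rw [show A.card = (A.card - 1) + 1 from (Nat.succ_pred_eq_of_pos hAne.card_pos).symm]
              rw [pow_succ]; ring
            · rw [Pf_of_ne a x hSne, mul_assoc, ← pow_add]
              have hS1 : 1 ≤ S.card := card_pos.mpr (nonempty_iff_ne_empty.mpr hSne)
              congr 2
              omega
          rw [hbase, neg_pow, hsign]
          rw [show Pf a x S * ((-1:ℚ)^A.card * (-1)^S.card * (x + ∑ i ∈ S, a i)^(A \ S).card)
              = ((-1:ℚ)^A.card * (-1)^S.card) * (Pf a x S * (x + ∑ i ∈ S, a i)^(A \ S).card) from by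
            ring, hPf]
          ring
        rw [Finset.sum_congr rfl hterm, ← Finset.mul_sum,
          FD a A hAne (A.card - 1) (by have := hAne.card_pos; omega) x, mul_zero]
      -- conclude
      have hdz : Polynomial.derivative (L - R) = 0 := by
        rw [Polynomial.derivative_sub, hder, sub_self]
      have hC := Polynomial.eq_C_of_natDegree_eq_zero
        (Polynomial.natDegree_eq_zero_of_derivative_eq_zero hdz)
      have h0 : (L - R).coeff 0 = 0 := by
        have := congrArg (Polynomial.eval (-(x + c + ∑ i ∈ A, a i))) hC
        rw [Polynomial.eval_sub, heval, sub_self, Polynomial.eval_C] at this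
        exact this.symm
      have hLR : L - R = 0 := by rw [hC, h0, map_zero]
      exact sub_eq_zero.mp hLR

/-- H1 in value form. -/
lemma H1 (a : ι → ℚ) (A : Finset ι) (x y : ℚ) :
    ∑ S ∈ A.powerset, Pf a x S * (y + ∑ i ∈ A \ S, a i) ^ (A \ S).card
      = (x + y + ∑ i ∈ A, a i) ^ A.card := by
  have h := congrArg (Polynomial.eval y) (H1poly a A x 0)
  simp only [Polynomial.eval_finset_sum, Polynomial.eval_mul, Polynomial.eval_pow,
    Polynomial.eval_add, Polynomial.eval_X, Polynomial.eval_C] at h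
  rw [show y + (x + 0 + ∑ i ∈ A, a i) = x + y + ∑ i ∈ A, a i by ring] at h
  rw [← h]
  exact Finset.sum_congr rfl fun S _ => by rw [zero_add]

/-- Swapping a sum over subsets and elements of the complement. -/
lemma swap_powerset_sdiff {M : Type} [AddCommMonoid M] (B : Finset ι) (f : ι → Finset ι → M) :
    ∑ S ∈ B.powerset, ∑ k ∈ B \ S, f k S = ∑ k ∈ B, ∑ S ∈ (B.erase k).powerset, f k S := by
  rw [Finset.sum_sigma', Finset.sum_sigma']
  refine Finset.sum_nbij' (fun p => ⟨p.2, p.1⟩) (fun p => ⟨p.2, p.1⟩) ?_ ?_ ?_ ?_ ?_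
  · rintro ⟨S, k⟩ h
    simp only [Finset.mem_sigma, mem_powerset, mem_sdiff] at h ⊢
    obtain ⟨hS, hkA, hkS⟩ := h
    exact ⟨hkA, fun y hy => mem_erase.mpr ⟨fun hyk => hkS (hyk ▸ hy), hS hy⟩⟩
  · rintro ⟨k, S⟩ h
    simp only [Finset.mem_sigma, mem_powerset, mem_sdiff] at h ⊢
    obtain ⟨hk, hS⟩ := h
    refine ⟨fun y hy => (mem_erase.mp (hS hy)).2, hk, fun hkS => (mem_erase.mp (hS hkS)).1 rfl⟩
  · rintro ⟨S, k⟩ _; rfl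
  · rintro ⟨k, S⟩ _; rfl
  · rintro ⟨S, k⟩ _; rfl

/-- The Hurwitz convolution identity H2: `Σ_{S⊆B} P x S · P y (B∖S) = P (x+y) B`. -/
lemma H2 (a : ι → ℚ) (B : Finset ι) (x y : ℚ) :
    ∑ S ∈ B.powerset, Pf a x S * Pf a y (B \ S) = Pf a (x + y) B := by
  rcases eq_or_ne B ∅ with rfl | hB
  · simp [Pf_empty]
  · have hBne : B.Nonempty := nonempty_iff_ne_empty.mpr hB
    have hPfdec : ∀ S ∈ B.powerset, Pf a y (B \ S)
        = (y + ∑ i ∈ B \ S, a i)^(B\S).card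
          - ∑ k ∈ B \ S, a k * (y + ∑ i ∈ B \ S, a i)^((B \ S).card - 1) := by
      intro S hS
      rcases eq_or_ne (B \ S) ∅ with hBS | hBS
      · rw [hBS]; simp [Pf_empty]
      · rw [Pf_of_ne a y hBS, ← Finset.sum_mul]
        have hc : (y + ∑ i ∈ B \ S, a i)^(B\S).card
            = (y + ∑ i ∈ B \ S, a i)^((B\S).card - 1) * (y + ∑ i ∈ B \ S, a i) := by
          rw [← pow_succ]; congr 1
          have := card_pos.mpr (nonempty_iff_ne_empty.mpr hBS); omega
        rw [hc]; ring
    calc ∑ S ∈ B.powerset, Pf a x S * Pf a y (B \ S)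
        = ∑ S ∈ B.powerset, (Pf a x S * (y + ∑ i ∈ B \ S, a i)^(B\S).card
            - ∑ k ∈ B \ S, a k * (Pf a x S *
              ((y + a k) + ∑ i ∈ (B.erase k) \ S, a i) ^ ((B.erase k) \ S).card)) := by
          refine Finset.sum_congr rfl fun S hS => ?_
          rw [hPfdec S hS, mul_sub]
          congr 1
          rw [Finset.mul_sum]
          refine Finset.sum_congr rfl fun k hk => ?_
          have hkB : k ∈ B := (mem_sdiff.mp hk).1
          have h1 : (B.erase k) \ S = (B \ S).erase k := by
            ext z; simp only [mem_sdiff, mem_erase]; tauto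
          have h2 : ((B.erase k) \ S).card = (B \ S).card - 1 := by
            rw [h1, card_erase_of_mem hk]
          have h3 : (y + a k) + ∑ i ∈ (B.erase k) \ S, a i = y + ∑ i ∈ B \ S, a i := by
            rw [h1, add_assoc, Finset.add_sum_erase _ _ hk]
          rw [h2, h3]; ring
      _ = (x + y + ∑ i ∈ B, a i)^B.card
            - ∑ k ∈ B, a k * (x + y + ∑ i ∈ B, a i)^(B.card - 1) := by
          rw [Finset.sum_sub_distrib, H1]
          congr 1
          rw [swap_powerset_sdiff]
          refine Finset.sum_congr rfl fun k hk => ?_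
          rw [← Finset.mul_sum, H1 a (B.erase k) x (y + a k)]
          have harg : x + (y + a k) + ∑ i ∈ B.erase k, a i = x + y + ∑ i ∈ B, a i := by
            rw [← Finset.add_sum_erase _ a hk]; ring
          rw [harg, card_erase_of_mem hk]
      _ = Pf a (x + y) B := by
          rw [← Finset.sum_mul, Pf_of_ne _ _ hB]
          have hc : (x + y + ∑ i ∈ B, a i)^B.card
              = (x + y + ∑ i ∈ B, a i)^(B.card - 1) * (x + y + ∑ i ∈ B, a i) := by
            rw [← pow_succ]; congr 1
            have := card_pos.mpr hBne; omega
          rw [hc]; ring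

lemma Qexp (a : ι → ℚ) {S : Finset ι} (hS : S ≠ ∅) :
    (∑ i ∈ S, a i) ^ (S.card - 1) = ∑ k ∈ S, Pf a (a k) (S.erase k) := by
  have h1 : 1 ≤ S.card := card_pos.mpr (nonempty_iff_ne_empty.mpr hS)
  rcases eq_or_lt_of_le h1 with h1' | h2
  · obtain ⟨k, rfl⟩ := card_eq_one.mp h1'.symm
    simp [Pf_empty]
  · have step : ∀ k ∈ S, Pf a (a k) (S.erase k) = a k * (∑ i ∈ S, a i)^(S.card - 2) := by
      intro k hk
      have hcard : (S.erase k).card = S.card - 1 := card_erase_of_mem hk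
      have hne : S.erase k ≠ ∅ := by
        intro h
        rw [h, card_empty] at hcard
        omega
      rw [Pf_of_ne _ _ hne, Finset.add_sum_erase _ a hk, hcard]
      congr 1
    rw [Finset.sum_congr rfl step, ← Finset.sum_mul]
    rw [show (∑ i ∈ S, a i) * (∑ i ∈ S, a i)^(S.card-2)
      = (∑ i ∈ S, a i)^(S.card-2+1) from (pow_succ' _ _).symm]
    congr 1
    omega

/-- The Cayley split identity (C). -/
lemma Csplit (a : ι → ℚ) (A : Finset ι) (hA : 2 ≤ A.card) :
    ∑ S ∈ A.powerset.filter (fun S => S ≠ ∅ ∧ S ≠ A),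
        (∑ i ∈ S, a i)^(S.card - 1) * (∑ i ∈ A \ S, a i)^((A \ S).card - 1)
      = 2 * ((A.card : ℚ) - 1) * (∑ i ∈ A, a i)^(A.card - 2) := by
  have step1 : ∀ S ∈ A.powerset.filter (fun S => S ≠ ∅ ∧ S ≠ A),
      (∑ i ∈ S, a i)^(S.card - 1) * (∑ i ∈ A \ S, a i)^((A \ S).card - 1)
      = ∑ k ∈ S, ∑ l ∈ A \ S, Pf a (a k) (S.erase k) * Pf a (a l) ((A \ S).erase l) := by
    intro S hS
    rw [mem_filter, mem_powerset] at hS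
    obtain ⟨hSA, hSne, hSA'⟩ := hS
    have hASne : A \ S ≠ ∅ := by
      intro h
      exact hSA' (Finset.Subset.antisymm hSA (sdiff_eq_empty_iff_subset.mp h))
    rw [Qexp a hSne, Qexp a hASne, Finset.sum_mul_sum]
  rw [Finset.sum_congr rfl step1]
  have step2 : ∑ S ∈ A.powerset.filter (fun S => S ≠ ∅ ∧ S ≠ A),
      ∑ k ∈ S, ∑ l ∈ A \ S, Pf a (a k) (S.erase k) * Pf a (a l) ((A \ S).erase l)
      = ∑ k ∈ A, ∑ l ∈ A.erase k, ∑ T ∈ ((A.erase k).erase l).powerset,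
          Pf a (a k) T * Pf a (a l) (((A.erase k).erase l) \ T) := by
    rw [Finset.sum_sigma', Finset.sum_sigma', Finset.sum_sigma', Finset.sum_sigma']
    refine Finset.sum_nbij' (fun q => ⟨⟨q.1.2, q.2⟩, q.1.1.erase q.1.2⟩)
      (fun q => ⟨⟨insert q.1.1 q.2, q.1.1⟩, q.1.2⟩) ?_ ?_ ?_ ?_ ?_
    · rintro ⟨⟨S, k⟩, l⟩ h
      simp only [Finset.mem_sigma, mem_filter, mem_powerset, mem_sdiff, mem_erase] at h ⊢
      obtain ⟨⟨⟨hSA, hSne, hSA'⟩, hkS⟩, hlA, hlS⟩ := h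
      refine ⟨⟨hSA hkS, fun hlk => hlS (hlk ▸ hkS), hlA⟩, ?_⟩
      intro y hy
      rw [mem_erase] at hy
      exact mem_erase.mpr ⟨fun h => hlS (h ▸ hy.2), mem_erase.mpr ⟨hy.1, hSA hy.2⟩⟩
    · rintro ⟨⟨k, l⟩, T⟩ h
      simp only [Finset.mem_sigma, mem_filter, mem_powerset, mem_sdiff, mem_erase] at h ⊢
      obtain ⟨⟨hkA, hlk, hlA⟩, hT⟩ := h
      have hkT : k ∉ T := fun h => (mem_erase.mp (mem_erase.mp (hT h)).2).1 rfl
      have hlT : l ∉ T := fun h => (mem_erase.mp (hT h)).1 rfl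
      refine ⟨⟨⟨?_, ?_, ?_⟩, mem_insert_self k T⟩, hlA, ?_⟩
      · intro y hy
        rcases mem_insert.mp hy with rfl | hyT
        · exact hkA
        · exact (mem_erase.mp (mem_erase.mp (hT hyT)).2).2
      · exact ne_empty_of_mem (mem_insert_self k T)
      · intro h
        have : l ∈ insert k T := h ▸ hlA
        rcases mem_insert.mp this with rfl | hlT'
        · exact hlk rfl
        · exact hlT hlT'
      · intro h
        rcases mem_insert.mp h with rfl | hlT'
        · exact hlk rfl
        · exact hlT hlT'
    · rintro ⟨⟨S, k⟩, l⟩ h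
      simp only [Finset.mem_sigma, mem_filter, mem_powerset, mem_sdiff] at h
      obtain ⟨⟨⟨hSA, hSne, hSA'⟩, hkS⟩, hlA, hlS⟩ := h
      simp [Finset.insert_erase hkS]
    · rintro ⟨⟨k, l⟩, T⟩ h
      simp only [Finset.mem_sigma, mem_filter, mem_powerset, mem_erase] at h
      obtain ⟨⟨hkA, hlk, hlA⟩, hT⟩ := h
      have hkT : k ∉ T := fun h => (mem_erase.mp (mem_erase.mp (hT h)).2).1 rfl
      simp [Finset.erase_insert hkT]
    · rintro ⟨⟨S, k⟩, l⟩ h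
      simp only [Finset.mem_sigma, mem_filter, mem_powerset, mem_sdiff] at h
      obtain ⟨⟨⟨hSA, hSne, hSA'⟩, hkS⟩, hlA, hlS⟩ := h
      have hset : (A \ S).erase l = ((A.erase k).erase l) \ (S.erase k) := by
        ext y
        simp only [mem_erase, mem_sdiff]
        by_cases hyk : y = k
        · subst hyk; simp [hkS]
        · tauto
      rw [hset]
  rw [step2]
  have hrest_card : ∀ k ∈ A, ∀ l ∈ A.erase k, ((A.erase k).erase l).card = A.card - 2 := by
    intro k hk l hl
    rw [card_erase_of_mem hl, card_erase_of_mem hk, Nat.sub_sub]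
  have hrest_sum : ∀ k ∈ A, ∀ l ∈ A.erase k,
      a k + a l + ∑ i ∈ (A.erase k).erase l, a i = ∑ i ∈ A, a i := by
    intro k hk l hl
    rw [add_assoc, Finset.add_sum_erase _ a hl, Finset.add_sum_erase _ a hk]
  rcases eq_or_lt_of_le hA with h2 | h3
  · have hstep : ∀ k ∈ A, ∀ l ∈ A.erase k, ∑ T ∈ ((A.erase k).erase l).powerset,
        Pf a (a k) T * Pf a (a l) (((A.erase k).erase l) \ T) = 1 := by
      intro k hk l hl
      rw [H2]
      have hres : (A.erase k).erase l = ∅ := card_eq_zero.mp (by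
        rw [hrest_card k hk l hl, ← h2])
      rw [hres, Pf_empty]
    rw [Finset.sum_congr rfl (fun k hk => Finset.sum_congr rfl (hstep k hk))]
    have inner1 : ∀ k ∈ A, ∑ _l ∈ A.erase k, (1:ℚ) = 1 := by
      intro k hk
      rw [Finset.sum_const, card_erase_of_mem hk, ← h2]
      norm_num
    rw [Finset.sum_congr rfl inner1, Finset.sum_const, ← h2]
    norm_num
  · have hstep : ∀ k ∈ A, ∀ l ∈ A.erase k, ∑ T ∈ ((A.erase k).erase l).powerset,
        Pf a (a k) T * Pf a (a l) (((A.erase k).erase l) \ T)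
        = (a k + a l) * (∑ i ∈ A, a i)^(A.card - 3) := by
      intro k hk l hl
      rw [H2]
      have hne : (A.erase k).erase l ≠ ∅ := by
        intro h
        have := hrest_card k hk l hl
        rw [h, card_empty] at this
        omega
      rw [Pf_of_ne _ _ hne, hrest_card k hk l hl, hrest_sum k hk l hl, Nat.sub_sub]
    have hsum : ∑ k ∈ A, ∑ l ∈ A.erase k, (a k + a l)
        = 2 * ((A.card:ℚ) - 1) * ∑ i ∈ A, a i := by
      have inner : ∀ k ∈ A, ∑ l ∈ A.erase k, (a k + a l)
          = ((A.card:ℚ) - 1) * a k + ((∑ i ∈ A, a i) - a k) := by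
        intro k hk
        rw [Finset.sum_add_distrib, Finset.sum_const, card_erase_of_mem hk, nsmul_eq_mul]
        congr 1
        · rw [Nat.cast_sub (by omega), Nat.cast_one]
        · refine eq_sub_of_add_eq ?_
          rw [add_comm, Finset.add_sum_erase _ a hk]
      rw [Finset.sum_congr rfl inner, Finset.sum_add_distrib, ← Finset.mul_sum,
        Finset.sum_sub_distrib, Finset.sum_const, nsmul_eq_mul]
      ring
    calc ∑ k ∈ A, ∑ l ∈ A.erase k, ∑ T ∈ ((A.erase k).erase l).powerset,
          Pf a (a k) T * Pf a (a l) (((A.erase k).erase l) \ T)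
        = (∑ k ∈ A, ∑ l ∈ A.erase k, (a k + a l)) * (∑ i ∈ A, a i)^(A.card - 3) := by
          rw [Finset.sum_mul]
          refine Finset.sum_congr rfl fun k hk => ?_
          rw [Finset.sum_mul]
          exact Finset.sum_congr rfl fun l hl => hstep k hk l hl
      _ = 2 * ((A.card:ℚ) - 1) * (∑ i ∈ A, a i)^(A.card - 2) := by
          rw [hsum]
          have hp : (∑ i ∈ A, a i) * (∑ i ∈ A, a i)^(A.card-3) = (∑ i ∈ A, a i)^(A.card-2) := by
            rw [← pow_succ']
            congr 1
            omega
          rw [mul_assoc, hp]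

/-- One-variable Abel identity: `Σ_{0<p<m} C(m,p) p^{p-1} (m-p)^{m-p-1} = 2(m-1)m^{m-2}`. -/
lemma Abel1 (m : ℕ) (hm : 1 ≤ m) :
    ∑ p ∈ Finset.Ioo 0 m, (m.choose p : ℚ) * (p:ℚ)^(p-1) * ((m-p : ℕ):ℚ)^(m-p-1)
      = 2*((m:ℚ)-1)*(m:ℚ)^(m-2) := by
  rcases eq_or_lt_of_le hm with h1 | h2
  · rw [← h1, show Finset.Ioo 0 1 = ∅ by decide]
    simp
  · have hC := Csplit (fun _ => (1:ℚ)) (univ : Finset (Fin m)) (by rw [card_univ, Fintype.card_fin]; exact h2)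
    have huniv : (univ : Finset (Fin m)).card = m := by simp
    have hterm : ∀ S : Finset (Fin m),
        (∑ _i ∈ S, (1:ℚ))^(S.card - 1) * (∑ _i ∈ (univ : Finset (Fin m)) \ S, (1:ℚ))^(((univ : Finset (Fin m)) \ S).card - 1)
        = (S.card : ℚ)^(S.card-1) * ((m - S.card : ℕ):ℚ)^(m - S.card - 1) := by
      intro S
      have hds : ((univ : Finset (Fin m)) \ S).card = m - S.card := by
        rw [card_sdiff_of_subset (subset_univ S), huniv]
      rw [Finset.sum_const, Finset.sum_const, hds, nsmul_eq_mul, nsmul_eq_mul, mul_one, mul_one]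
    rw [Finset.sum_congr rfl (fun S _ => hterm S)] at hC
    have hpartition : (univ : Finset (Fin m)).powerset.filter (fun S => S ≠ ∅ ∧ S ≠ univ)
        = (Finset.Ioo 0 m).biUnion (fun j => Finset.powersetCard j univ) := by
      ext S
      simp only [mem_filter, mem_powerset, mem_biUnion, Finset.mem_Ioo, mem_powersetCard]
      constructor
      · rintro ⟨-, hne, hnu⟩
        refine ⟨S.card, ⟨card_pos.mpr (nonempty_iff_ne_empty.mpr hne), ?_⟩, subset_univ S, rfl⟩
        have hss : S ⊂ univ := Finset.ssubset_univ_iff.mpr hnu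
        have := Finset.card_lt_card hss
        rwa [huniv] at this
      · rintro ⟨j, ⟨hj0, hjm⟩, -, rfl⟩
        refine ⟨subset_univ S, ?_, ?_⟩
        · intro h
          rw [h, card_empty] at hj0
          omega
        · intro h
          rw [h, huniv] at hjm
          omega
    rw [hpartition, Finset.sum_biUnion (fun x _ y _ hxy => by
      simp only [Function.onFun]
      rw [Finset.disjoint_left]
      intro S hSx hSy
      rw [mem_powersetCard] at hSx hSy
      exact hxy (hSx.2 ▸ hSy.2))] at hC
    have hconst : ∀ j ∈ Finset.Ioo 0 m, ∑ S ∈ Finset.powersetCard j (univ : Finset (Fin m)),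
        (S.card : ℚ)^(S.card-1) * ((m - S.card : ℕ):ℚ)^(m - S.card - 1)
        = (m.choose j : ℚ) * (j:ℚ)^(j-1) * ((m-j : ℕ):ℚ)^(m-j-1) := by
      intro j _
      rw [Finset.sum_congr rfl (fun S hS => by
        rw [(Finset.mem_powersetCard.mp hS).2]), Finset.sum_const,
        Finset.card_powersetCard, huniv, nsmul_eq_mul]
      ring
    rw [Finset.sum_congr rfl hconst] at hC
    rw [hC, huniv]
    have : ∑ _i : Fin m, (1:ℚ) = m := by
      rw [Finset.sum_const, nsmul_eq_mul, mul_one, huniv]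
    rw [this]

lemma Pf_mul (a : ι → ℚ) (x : ℚ) (S : Finset ι) :
    Pf a x S * ((∑ i ∈ S, a i) + x) = x * ((∑ i ∈ S, a i) + x) ^ S.card := by
  rcases eq_or_ne S ∅ with rfl | h
  · simp [Pf_empty]
  · rw [Pf_of_ne _ _ h, show x + ∑ i ∈ S, a i = (∑ i ∈ S, a i) + x from add_comm _ _,
      mul_assoc, ← pow_succ]
    congr 2
    have := Finset.card_pos.mpr (Finset.nonempty_iff_ne_empty.mpr h)
    omega

lemma Pf_div (a : ι → ℚ) (x : ℚ) (S : Finset ι) (hx : ((∑ i ∈ S, a i) + x) ≠ 0) :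
    Pf a x S = x * ((∑ i ∈ S, a i) + x) ^ S.card / ((∑ i ∈ S, a i) + x) := by
  rw [eq_div_iff hx]
  exact Pf_mul a x S

lemma fac_pred (m : ℕ) (hm : 0 < m) :
    (m.factorial : ℚ) = (m : ℚ) * ((m - 1).factorial : ℚ) := by
  have h : m = (m - 1) + 1 := by omega
  conv_lhs => rw [h, Nat.factorial_succ]
  push_cast
  have h2 : ((m - 1 : ℕ) : ℚ) + 1 = m := by exact_mod_cast congrArg (Nat.cast : ℕ → ℚ) h.symm
  rw [h2]


end CoreIdentities

section GtHelpers

/-- Normal form for `Gt` with natural-number exponents. -/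
lemma Gt_eq {κ : Type} [Fintype κ] (β : κ → ℕ) (hs : 0 < ∑ i, β i)
    (hc : 1 ≤ Fintype.card κ) :
    Gt β = (Nat.factorial (r0 β) : ℚ) * ((∑ i, β i : ℕ) : ℚ)^(Fintype.card κ - 1)
      * (∏ i, (β i : ℚ) ^ (β i - 1))
      / ((((∑ i, β i : ℕ) : ℚ))^2 * ∏ i, (Nat.factorial (β i - 1) : ℚ)) := by
  unfold Gt
  have h0 : ((∑ i, β i : ℕ) : ℚ) ≠ 0 := by
    exact_mod_cast hs.ne'
  have hfac : (∏ i, (Nat.factorial (β i - 1) : ℚ)) ≠ 0 :=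
    Finset.prod_ne_zero_iff.mpr fun i _ => by
      exact_mod_cast (Nat.factorial_pos _).ne'
  have hz : ((Fintype.card κ : ℤ) - 2) = ((Fintype.card κ - 1 : ℕ) : ℤ) + (-1) := by
    omega
  rw [hz, zpow_add₀ h0, zpow_natCast, zpow_neg_one]
  field_simp

section helpers
variable {n : ℕ} (α : Fin n → ℕ)

lemma r0_subtype (S : Finset (Fin n)) :
    r0 (fun i : {x // x ∈ S} => α i.1) = (∑ x ∈ S, α x) + S.card - 2 := by
  unfold r0
  rw [Finset.sum_coe_sort, Fintype.card_coe]

lemma r0_sumtype (S : Finset (Fin n)) (p : ℕ) :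
    r0 (Sum.elim (fun i : {x // x ∈ S} => α i.1) (fun _ : Unit => p))
      = (∑ x ∈ S, α x) + p + (S.card + 1) - 2 := by
  unfold r0
  rw [Fintype.sum_sum_type]
  simp only [Sum.elim_inl, Sum.elim_inr, Fintype.card_sum, Fintype.card_coe, Fintype.card_unit]
  rw [Finset.sum_coe_sort]
  simp

lemma Gt_subtype (hpos : ∀ i, 0 < α i) (S : Finset (Fin n)) (hS : S ≠ ∅) :
    Gt (fun i : {x // x ∈ S} => α i.1)
      = (((∑ x ∈ S, α x) + S.card - 2).factorial : ℚ)
        * ((∑ x ∈ S, α x : ℕ) : ℚ)^(S.card - 1) * (∏ x ∈ S, (α x : ℚ)^(α x - 1))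
        / ((((∑ x ∈ S, α x : ℕ) : ℚ))^2 * ∏ x ∈ S, ((α x - 1).factorial : ℚ)) := by
  have hSne : S.Nonempty := Finset.nonempty_iff_ne_empty.mpr hS
  have hs : 0 < ∑ i : {x // x ∈ S}, α i.1 := by
    rw [Finset.sum_coe_sort]
    exact Finset.sum_pos (fun i _ => hpos i) hSne
  have hc : 1 ≤ Fintype.card {x // x ∈ S} := by
    rw [Fintype.card_coe]
    exact Finset.card_pos.mpr hSne
  rw [Gt_eq _ hs hc, r0_subtype, Finset.sum_coe_sort, Fintype.card_coe,
    Finset.prod_coe_sort S (fun x => ((α x : ℚ))^(α x - 1)),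
    Finset.prod_coe_sort S (fun x => (((α x - 1).factorial : ℕ) : ℚ))]

lemma Gt_sumtype (S : Finset (Fin n)) (p : ℕ) (hp : 0 < p) :
    Gt (Sum.elim (fun i : {x // x ∈ S} => α i.1) (fun _ : Unit => p))
      = ((((∑ x ∈ S, α x) + p + (S.card + 1) - 2).factorial : ℚ))
        * (((∑ x ∈ S, α x) + p : ℕ) : ℚ)^(S.card) * ((∏ x ∈ S, (α x : ℚ)^(α x - 1)) * (p:ℚ)^(p-1))
        / (((((∑ x ∈ S, α x) + p : ℕ) : ℚ))^2 * ((∏ x ∈ S, ((α x - 1).factorial : ℚ)) * ((p-1).factorial : ℚ))) := by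
  have hs : 0 < ∑ i, (Sum.elim (fun i : {x // x ∈ S} => α i.1) (fun _ : Unit => p)) i := by
    rw [Fintype.sum_sum_type]
    simp only [Sum.elim_inl, Sum.elim_inr]
    have : 0 < ∑ _u : Unit, p := by simpa using hp
    omega
  have hc : 1 ≤ Fintype.card ({x // x ∈ S} ⊕ Unit) := by
    simp [Fintype.card_sum]
  rw [Gt_eq _ hs hc, r0_sumtype]
  rw [Fintype.sum_sum_type, Fintype.prod_sum_type, Fintype.prod_sum_type]
  simp only [Sum.elim_inl, Sum.elim_inr, Fintype.card_sum, Fintype.card_coe,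
    Fintype.card_unit]
  rw [Finset.sum_coe_sort,
    Finset.prod_coe_sort S (fun x => ((α x : ℚ))^(α x - 1)),
    Finset.prod_coe_sort S (fun x => (((α x - 1).factorial : ℕ) : ℚ)),
    show (∑ _x : Unit, p) = p by simp,
    show (∏ _x : Unit, ((p:ℚ))^(p-1)) = (p:ℚ)^(p-1) by simp,
    show (∏ _x : Unit, (((p-1).factorial : ℕ):ℚ)) = (((p-1).factorial : ℕ):ℚ) by simp,
    Nat.add_sub_cancel]

end helpers

end GtHelpers

/-- The genus-0 recursion for the closed-form genus-0 Hurwitz numbers `G̃⁰`: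
`G̃⁰_α = (r⁰_α - 1) Σ_{α=β⊔γ} (i²j²/d) G̃⁰_β G̃⁰_γ C(r⁰_α-2, r⁰_β)
        + Σ (α_k/2) C(r⁰_α-1, r⁰_β) (ij/d) G̃⁰_β G̃⁰_γ`,
the first sum over splittings of the parts of `α` into nonempty sub-collections `β` (the
parts in `S`, of vertex total `i`) and `γ` (the parts in `Sᶜ`, of vertex total `j`); the
second sum over parts `α_k`, decompositions `α_k = p + q` with `p, q ≥ 1`, and splittings of
the remaining parts, `β` being `p` together with the parts in `S` (of total `i`) and `γ`
being `q` together with the remaining parts (of total `j`). -/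
theorem Gt_recursion (n d : ℕ) (α : Fin n → ℕ) (hpos : ∀ i, 0 < α i)
    (hsum : ∑ i, α i = d) (hbase : 3 ≤ d + n) :
    Gt α =
      ((r0 α : ℚ) - 1) *
        (∑ S ∈ Finset.univ.powerset.filter
            (fun S : Finset (Fin n) => S ≠ ∅ ∧ S ≠ Finset.univ),
          ((∑ x ∈ S, (α x : ℚ)) ^ 2 * (∑ x ∈ Sᶜ, (α x : ℚ)) ^ 2 / (d : ℚ)) *
            Gt (fun i : {x // x ∈ S} => α i.1) * Gt (fun i : {x // x ∈ Sᶜ} => α i.1) *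
            (Nat.choose (r0 α - 2) (r0 (fun i : {x // x ∈ S} => α i.1)) : ℚ))
      + ∑ k : Fin n, ∑ p ∈ Finset.Ioo 0 (α k), ∑ S ∈ (Finset.univ.erase k).powerset,
          ((α k : ℚ) / 2) *
            (Nat.choose (r0 α - 1)
              (r0 (Sum.elim (fun i : {x // x ∈ S} => α i.1)
                (fun _ : Unit => p))) : ℚ) *
            ((p + ∑ x ∈ S, (α x : ℚ)) *
              ((α k - p : ℕ) + ∑ x ∈ Finset.univ.erase k \ S, (α x : ℚ)) / (d : ℚ)) *
            Gt (Sum.elim (fun i : {x // x ∈ S} => α i.1) (fun _ : Unit => p)) *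
            Gt (Sum.elim (fun i : {x // x ∈ Finset.univ.erase k \ S} => α i.1)
              (fun _ : Unit => α k - p)) := by
  classical
  rcases Nat.eq_zero_or_pos n with rfl | hn
  · exfalso
    simp at hsum
    omega
  have hnd : n ≤ d := by
    have h1 : (∑ _i : Fin n, (1:ℕ)) ≤ ∑ i, α i := Finset.sum_le_sum (fun i _ => hpos i)
    simp only [Finset.sum_const, smul_eq_mul, mul_one, Finset.card_univ, Fintype.card_fin] at h1
    omega
  have hcardu : (Finset.univ : Finset (Fin n)).card = n := by simp
  have hr0α : r0 α = d + n - 2 := by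
    unfold r0
    rw [hsum, Fintype.card_fin]
  have hdQ : ((d:ℚ)) ≠ 0 := Nat.cast_ne_zero.mpr (by omega)
  have hPi2 : (∏ i, ((α i - 1).factorial : ℚ)) ≠ 0 :=
    Finset.prod_ne_zero_iff.mpr (fun i _ => by exact_mod_cast (Nat.factorial_pos _).ne')
  have hcastsum : ∀ T : Finset (Fin n), ((∑ x ∈ T, α x : ℕ) : ℚ) = ∑ x ∈ T, (α x : ℚ) :=
    fun T => by push_cast; rfl
  have haud : (∑ i, (α i : ℚ)) = (d : ℚ) := by
    rw [← hcastsum, hsum]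
  -- ================= first sum pointwise =================
  have key1 : ∀ S ∈ Finset.univ.powerset.filter
      (fun S : Finset (Fin n) => S ≠ ∅ ∧ S ≠ Finset.univ),
      ((∑ x ∈ S, (α x : ℚ)) ^ 2 * (∑ x ∈ Sᶜ, (α x : ℚ)) ^ 2 / (d : ℚ)) *
        Gt (fun i : {x // x ∈ S} => α i.1) * Gt (fun i : {x // x ∈ Sᶜ} => α i.1) *
        (Nat.choose (r0 α - 2) (r0 (fun i : {x // x ∈ S} => α i.1)) : ℚ)
      = (((d + n - 4).factorial : ℚ) * (∏ i, (α i : ℚ)^(α i - 1))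
          / ((d:ℚ) * ∏ i, ((α i - 1).factorial : ℚ)))
        * ((∑ x ∈ S, (α x : ℚ))^(S.card - 1) * (∑ x ∈ Sᶜ, (α x : ℚ))^(Sᶜ.card - 1)) := by
    intro S hS
    rw [Finset.mem_filter, Finset.mem_powerset] at hS
    obtain ⟨-, hSne, hSnu⟩ := hS
    have hTne : Sᶜ ≠ ∅ := by
      intro h
      exact hSnu (by rwa [Finset.compl_eq_empty_iff] at h)
    have hsplit : (∑ x ∈ S, α x) + (∑ x ∈ Sᶜ, α x) = d := by
      rw [Finset.sum_add_sum_compl, hsum]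
    have hcards : S.card + Sᶜ.card = n := by
      rw [Finset.card_add_card_compl, Fintype.card_fin]
    have hS1 : 1 ≤ S.card := Finset.card_pos.mpr (Finset.nonempty_iff_ne_empty.mpr hSne)
    have hT1 : 1 ≤ Sᶜ.card := Finset.card_pos.mpr (Finset.nonempty_iff_ne_empty.mpr hTne)
    have hSs : S.card ≤ ∑ x ∈ S, α x := by
      calc S.card = ∑ _x ∈ S, 1 := by rw [Finset.sum_const, smul_eq_mul, mul_one]
      _ ≤ ∑ x ∈ S, α x := Finset.sum_le_sum fun i _ => hpos i
    have hTs : Sᶜ.card ≤ ∑ x ∈ Sᶜ, α x := by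
      calc Sᶜ.card = ∑ _x ∈ Sᶜ, 1 := by rw [Finset.sum_const, smul_eq_mul, mul_one]
      _ ≤ ∑ x ∈ Sᶜ, α x := Finset.sum_le_sum fun i _ => hpos i
    have hnat : (d + n - 4).choose ((∑ x ∈ S, α x) + S.card - 2)
        * ((∑ x ∈ S, α x) + S.card - 2).factorial
        * ((∑ x ∈ Sᶜ, α x) + Sᶜ.card - 2).factorial = (d + n - 4).factorial := by
      have h := Nat.add_choose_mul_factorial_mul_factorial
        ((∑ x ∈ Sᶜ, α x) + Sᶜ.card - 2) ((∑ x ∈ S, α x) + S.card - 2)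
      rw [show ((∑ x ∈ Sᶜ, α x) + Sᶜ.card - 2) + ((∑ x ∈ S, α x) + S.card - 2) = d + n - 4
        from by omega] at h
      rw [← h]
      ring
    have hFz1 : ((((∑ x ∈ S, α x) + S.card - 2).factorial : ℕ) : ℚ) ≠ 0 := by
      exact_mod_cast (Nat.factorial_pos _).ne'
    have hFz2 : ((((∑ x ∈ Sᶜ, α x) + Sᶜ.card - 2).factorial : ℕ) : ℚ) ≠ 0 := by
      exact_mod_cast (Nat.factorial_pos _).ne'
    have hfs : (0:ℚ) < ∑ x ∈ S, (α x:ℚ) := by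
      rw [← hcastsum]
      have : 0 < ∑ x ∈ S, α x := by omega
      exact_mod_cast this
    have hft : (0:ℚ) < ∑ x ∈ Sᶜ, (α x:ℚ) := by
      rw [← hcastsum]
      have : 0 < ∑ x ∈ Sᶜ, α x := by omega
      exact_mod_cast this
    have hch : (((d + n - 4).choose ((∑ x ∈ S, α x) + S.card - 2)) : ℚ)
        = ((d + n - 4).factorial : ℚ)
          / (((((∑ x ∈ S, α x) + S.card - 2).factorial : ℕ):ℚ)
            * ((((∑ x ∈ Sᶜ, α x) + Sᶜ.card - 2).factorial : ℕ):ℚ)) := by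
      rw [eq_div_iff (mul_ne_zero hFz1 hFz2), ← mul_assoc]
      exact_mod_cast hnat
    have hprodz1 : (∏ x ∈ S, ((α x - 1).factorial : ℚ)) ≠ 0 :=
      Finset.prod_ne_zero_iff.mpr (fun i _ => by exact_mod_cast (Nat.factorial_pos _).ne')
    have hprodz2 : (∏ x ∈ Sᶜ, ((α x - 1).factorial : ℚ)) ≠ 0 :=
      Finset.prod_ne_zero_iff.mpr (fun i _ => by exact_mod_cast (Nat.factorial_pos _).ne')
    rw [Gt_subtype α hpos S hSne, Gt_subtype α hpos Sᶜ hTne, r0_subtype, hr0α,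
      show d + n - 2 - 2 = d + n - 4 from by omega, hch,
      ← Finset.prod_mul_prod_compl S (fun i => (α i:ℚ)^(α i - 1)),
      ← Finset.prod_mul_prod_compl S (fun i => (((α i - 1).factorial : ℕ):ℚ)),
      hcastsum S, hcastsum Sᶜ]
    field_simp
  -- ================= second sum pointwise =================
  have key2 : ∀ k : Fin n, ∀ p ∈ Finset.Ioo 0 (α k), ∀ S ∈ (Finset.univ.erase k).powerset,
      ((α k : ℚ) / 2) *
        (Nat.choose (r0 α - 1)
          (r0 (Sum.elim (fun i : {x // x ∈ S} => α i.1) (fun _ : Unit => p))) : ℚ) *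
        ((p + ∑ x ∈ S, (α x : ℚ)) *
          ((α k - p : ℕ) + ∑ x ∈ Finset.univ.erase k \ S, (α x : ℚ)) / (d : ℚ)) *
        Gt (Sum.elim (fun i : {x // x ∈ S} => α i.1) (fun _ : Unit => p)) *
        Gt (Sum.elim (fun i : {x // x ∈ Finset.univ.erase k \ S} => α i.1)
          (fun _ : Unit => α k - p))
      = (((d + n - 3).factorial : ℚ) * (∏ l ∈ Finset.univ.erase k, (α l:ℚ)^(α l - 1))
          / (2 * (d:ℚ) * ∏ l, ((α l - 1).factorial : ℚ)))
        * ((α k).choose p : ℚ) * (p:ℚ)^(p-1) * ((α k - p : ℕ):ℚ)^(α k - p - 1)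
        * (Pf (fun i => (α i : ℚ)) (p:ℚ) S
            * Pf (fun i => (α i : ℚ)) ((α k - p : ℕ):ℚ) (Finset.univ.erase k \ S)) := by
    intro k p hp S hS
    rw [Finset.mem_Ioo] at hp
    obtain ⟨hp0, hpk⟩ := hp
    rw [Finset.mem_powerset] at hS
    have hq0 : 0 < α k - p := by omega
    set q := α k - p with hq
    set E := Finset.univ.erase k with hE
    set T := E \ S with hT
    have hαE : α k + ∑ x ∈ E, α x = d := by
      rw [hE, Finset.add_sum_erase _ α (Finset.mem_univ k), hsum]
    have hST : (∑ x ∈ S, α x) + (∑ x ∈ T, α x) = ∑ x ∈ E, α x := by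
      rw [hT, ← Finset.sum_union Finset.disjoint_sdiff, Finset.union_sdiff_of_subset hS]
    have hEcard : E.card = n - 1 := by
      rw [hE, Finset.card_erase_of_mem (Finset.mem_univ k), hcardu]
    have hTcard : T.card + S.card = E.card := Finset.card_sdiff_add_card_eq_card hS
    have hSs : S.card ≤ ∑ x ∈ S, α x := by
      calc S.card = ∑ _x ∈ S, 1 := by rw [Finset.sum_const, smul_eq_mul, mul_one]
      _ ≤ ∑ x ∈ S, α x := Finset.sum_le_sum fun i _ => hpos i
    have hTs : T.card ≤ ∑ x ∈ T, α x := by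
      calc T.card = ∑ _x ∈ T, 1 := by rw [Finset.sum_const, smul_eq_mul, mul_one]
      _ ≤ ∑ x ∈ T, α x := Finset.sum_le_sum fun i _ => hpos i
    have hnat : (d + n - 3).choose ((∑ x ∈ S, α x) + p + (S.card + 1) - 2)
        * ((∑ x ∈ S, α x) + p + (S.card + 1) - 2).factorial
        * ((∑ x ∈ T, α x) + q + (T.card + 1) - 2).factorial = (d + n - 3).factorial := by
      have h := Nat.add_choose_mul_factorial_mul_factorial
        ((∑ x ∈ T, α x) + q + (T.card + 1) - 2) ((∑ x ∈ S, α x) + p + (S.card + 1) - 2)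
      rw [show ((∑ x ∈ T, α x) + q + (T.card + 1) - 2)
          + ((∑ x ∈ S, α x) + p + (S.card + 1) - 2) = d + n - 3 from by omega] at h
      rw [← h]
      ring
    have hFz1 : ((((∑ x ∈ S, α x) + p + (S.card + 1) - 2).factorial : ℕ) : ℚ) ≠ 0 := by
      exact_mod_cast (Nat.factorial_pos _).ne'
    have hFz2 : ((((∑ x ∈ T, α x) + q + (T.card + 1) - 2).factorial : ℕ) : ℚ) ≠ 0 := by
      exact_mod_cast (Nat.factorial_pos _).ne'
    have hch : (((d + n - 3).choose ((∑ x ∈ S, α x) + p + (S.card + 1) - 2)) : ℚ)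
        = ((d + n - 3).factorial : ℚ)
          / (((((∑ x ∈ S, α x) + p + (S.card + 1) - 2).factorial : ℕ):ℚ)
            * ((((∑ x ∈ T, α x) + q + (T.card + 1) - 2).factorial : ℕ):ℚ)) := by
      rw [eq_div_iff (mul_ne_zero hFz1 hFz2), ← mul_assoc]
      exact_mod_cast hnat
    have hpQ : (0:ℚ) < (p:ℚ) := by exact_mod_cast hp0
    have hqQ : (0:ℚ) < ((q:ℕ):ℚ) := by exact_mod_cast hq0
    have hsS : (0:ℚ) ≤ ∑ x ∈ S, (α x:ℚ) := Finset.sum_nonneg fun i _ => by positivity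
    have hsT : (0:ℚ) ≤ ∑ x ∈ T, (α x:ℚ) := Finset.sum_nonneg fun i _ => by positivity
    have hx1 : ((∑ x ∈ S, (α x:ℚ)) + (p:ℚ)) ≠ 0 := by linarith
    have hx2 : ((∑ x ∈ T, (α x:ℚ)) + ((q:ℕ):ℚ)) ≠ 0 := by linarith
    have hPf1 : Pf (fun i => (α i:ℚ)) (p:ℚ) S
        = (p:ℚ) * ((∑ x ∈ S, (α x:ℚ)) + p)^S.card / ((∑ x ∈ S, (α x:ℚ)) + p) :=
      Pf_div _ _ _ hx1
    have hPf2 : Pf (fun i => (α i:ℚ)) ((q:ℕ):ℚ) T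
        = ((q:ℕ):ℚ) * ((∑ x ∈ T, (α x:ℚ)) + ((q:ℕ):ℚ))^T.card / ((∑ x ∈ T, (α x:ℚ)) + ((q:ℕ):ℚ)) :=
      Pf_div _ _ _ hx2
    have hfp : (p.factorial : ℚ) = (p:ℚ) * ((p-1).factorial:ℚ) := fac_pred p hp0
    have hfq : (q.factorial : ℚ) = ((q:ℕ):ℚ) * ((q-1).factorial:ℚ) := fac_pred q hq0
    have hfαk : ((α k).factorial : ℚ) = (α k:ℚ) * ((α k - 1).factorial : ℚ) :=
      fac_pred _ (hpos k)
    have hfpz : ((p.factorial : ℕ):ℚ) ≠ 0 := by exact_mod_cast (Nat.factorial_pos _).ne'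
    have hfqz : ((q.factorial : ℕ):ℚ) ≠ 0 := by exact_mod_cast (Nat.factorial_pos _).ne'
    have hch2 : (((α k).choose p):ℚ)
        = ((α k).factorial:ℚ)/((p.factorial:ℚ) * ((q.factorial : ℕ):ℚ)) := by
      rw [eq_div_iff (mul_ne_zero hfpz hfqz), ← mul_assoc]
      exact_mod_cast Nat.choose_mul_factorial_mul_factorial (le_of_lt hpk)
    have hPsplit : (∏ l, ((α l - 1).factorial : ℚ))
        = ((α k - 1).factorial : ℚ) * ∏ l ∈ E, ((α l - 1).factorial : ℚ) := by
      rw [hE]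
      exact (Finset.mul_prod_erase Finset.univ
        (fun l => (((α l - 1).factorial : ℕ):ℚ)) (Finset.mem_univ k)).symm
    have hprodz1 : (∏ x ∈ S, ((α x - 1).factorial : ℚ)) ≠ 0 :=
      Finset.prod_ne_zero_iff.mpr (fun i _ => by exact_mod_cast (Nat.factorial_pos _).ne')
    have hprodz2 : (∏ x ∈ T, ((α x - 1).factorial : ℚ)) ≠ 0 :=
      Finset.prod_ne_zero_iff.mpr (fun i _ => by exact_mod_cast (Nat.factorial_pos _).ne')
    have hprodES : (∏ l ∈ E, (α l:ℚ)^(α l - 1))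
        = (∏ x ∈ S, (α x:ℚ)^(α x - 1)) * (∏ x ∈ T, (α x:ℚ)^(α x - 1)) := by
      rw [hT, ← Finset.prod_sdiff hS]
      ring
    have hprodES2 : (∏ l ∈ E, ((α l - 1).factorial : ℚ))
        = (∏ x ∈ S, ((α x - 1).factorial : ℚ)) * (∏ x ∈ T, ((α x - 1).factorial : ℚ)) := by
      rw [hT, ← Finset.prod_sdiff hS]
      ring
    rw [Gt_sumtype α S p hp0, Gt_sumtype α T q hq0, r0_sumtype, hr0α,
      show d + n - 2 - 1 = d + n - 3 from by omega, hch, hPf1, hPf2, hch2, hfp, hfq, hfαk,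
      hPsplit, hprodES, hprodES2]
    push_cast
    field_simp
    ring
  -- ================= collapse the S-sum (H2) =================
  have key2S : ∀ k : Fin n, ∀ p ∈ Finset.Ioo 0 (α k),
      ∑ S ∈ (Finset.univ.erase k).powerset,
        ((α k : ℚ) / 2) *
          (Nat.choose (r0 α - 1)
            (r0 (Sum.elim (fun i : {x // x ∈ S} => α i.1) (fun _ : Unit => p))) : ℚ) *
          ((p + ∑ x ∈ S, (α x : ℚ)) *
            ((α k - p : ℕ) + ∑ x ∈ Finset.univ.erase k \ S, (α x : ℚ)) / (d : ℚ)) *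
          Gt (Sum.elim (fun i : {x // x ∈ S} => α i.1) (fun _ : Unit => p)) *
          Gt (Sum.elim (fun i : {x // x ∈ Finset.univ.erase k \ S} => α i.1)
            (fun _ : Unit => α k - p))
      = (((d + n - 3).factorial : ℚ) * (∏ l ∈ Finset.univ.erase k, (α l:ℚ)^(α l - 1))
          / (2 * (d:ℚ) * ∏ l, ((α l - 1).factorial : ℚ)))
        * ((α k).choose p : ℚ) * (p:ℚ)^(p-1) * ((α k - p : ℕ):ℚ)^(α k - p - 1)
        * Pf (fun i => (α i : ℚ)) ((α k : ℚ)) (Finset.univ.erase k) := by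
    intro k p hp
    have hpq : (p:ℚ) + ((α k - p : ℕ):ℚ) = (α k : ℚ) := by
      have h1 := Finset.mem_Ioo.mp hp
      have h2 : p + (α k - p) = α k := by omega
      exact_mod_cast congrArg (Nat.cast : ℕ → ℚ) h2
    rw [Finset.sum_congr rfl (key2 k p hp), ← Finset.mul_sum, H2, hpq]
  -- ================= collapse the p-sum (Abel) =================
  have key2p : ∀ k : Fin n,
      ∑ p ∈ Finset.Ioo 0 (α k),
        ((((d + n - 3).factorial : ℚ) * (∏ l ∈ Finset.univ.erase k, (α l:ℚ)^(α l - 1))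
          / (2 * (d:ℚ) * ∏ l, ((α l - 1).factorial : ℚ)))
        * ((α k).choose p : ℚ) * (p:ℚ)^(p-1) * ((α k - p : ℕ):ℚ)^(α k - p - 1)
        * Pf (fun i => (α i : ℚ)) ((α k : ℚ)) (Finset.univ.erase k))
      = (((d + n - 3).factorial : ℚ) * (∏ l ∈ Finset.univ.erase k, (α l:ℚ)^(α l - 1))
          / (2 * (d:ℚ) * ∏ l, ((α l - 1).factorial : ℚ)))
        * Pf (fun i => (α i : ℚ)) ((α k : ℚ)) (Finset.univ.erase k)
        * (2*((α k:ℚ)-1)*(α k:ℚ)^(α k - 2)) := by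
    intro k
    have hre : ∀ p ∈ Finset.Ioo 0 (α k),
        ((((d + n - 3).factorial : ℚ) * (∏ l ∈ Finset.univ.erase k, (α l:ℚ)^(α l - 1))
          / (2 * (d:ℚ) * ∏ l, ((α l - 1).factorial : ℚ)))
        * ((α k).choose p : ℚ) * (p:ℚ)^(p-1) * ((α k - p : ℕ):ℚ)^(α k - p - 1)
        * Pf (fun i => (α i : ℚ)) ((α k : ℚ)) (Finset.univ.erase k))
        = ((((d + n - 3).factorial : ℚ) * (∏ l ∈ Finset.univ.erase k, (α l:ℚ)^(α l - 1))
          / (2 * (d:ℚ) * ∏ l, ((α l - 1).factorial : ℚ)))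
            * Pf (fun i => (α i : ℚ)) ((α k : ℚ)) (Finset.univ.erase k))
          * (((α k).choose p : ℚ) * (p:ℚ)^(p-1) * ((α k - p : ℕ):ℚ)^(α k - p - 1)) :=
      fun p _ => by ring
    rw [Finset.sum_congr rfl hre, ← Finset.mul_sum, Abel1 (α k) (hpos k)]
  -- ================= rewrite the whole RHS =================
  have second_total : (∑ k : Fin n, ∑ p ∈ Finset.Ioo 0 (α k),
        ∑ S ∈ (Finset.univ.erase k).powerset,
          ((α k : ℚ) / 2) *
            (Nat.choose (r0 α - 1)
              (r0 (Sum.elim (fun i : {x // x ∈ S} => α i.1)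
                (fun _ : Unit => p))) : ℚ) *
            ((p + ∑ x ∈ S, (α x : ℚ)) *
              ((α k - p : ℕ) + ∑ x ∈ Finset.univ.erase k \ S, (α x : ℚ)) / (d : ℚ)) *
            Gt (Sum.elim (fun i : {x // x ∈ S} => α i.1) (fun _ : Unit => p)) *
            Gt (Sum.elim (fun i : {x // x ∈ Finset.univ.erase k \ S} => α i.1)
              (fun _ : Unit => α k - p)))
      = ∑ k : Fin n, ((((d + n - 3).factorial : ℚ)
            * (∏ l ∈ Finset.univ.erase k, (α l:ℚ)^(α l - 1))
            / (2 * (d:ℚ) * ∏ l, ((α l - 1).factorial : ℚ)))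
          * Pf (fun i => (α i : ℚ)) ((α k : ℚ)) (Finset.univ.erase k)
          * (2*((α k:ℚ)-1)*(α k:ℚ)^(α k - 2))) := by
    refine Finset.sum_congr rfl fun k _ => ?_
    rw [Finset.sum_congr rfl (key2S k), key2p k]
  rw [Finset.sum_congr rfl key1, ← Finset.mul_sum, second_total]
  -- ================= final assembly =================
  have hGt : Gt α = ((d + n - 2).factorial : ℚ) * ((d:ℚ))^(n - 1)
      * (∏ i, (α i : ℚ)^(α i - 1)) / (((d:ℚ))^2 * ∏ i, ((α i - 1).factorial : ℚ)) := by
    rw [Gt_eq α (by omega) (by rw [Fintype.card_fin]; omega), hr0α, hsum, Fintype.card_fin]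
  rcases eq_or_lt_of_le (Nat.one_le_iff_ne_zero.mpr (Nat.pos_iff_ne_zero.mp hn)) with h1 | h2
  · -- n = 1
    obtain rfl : n = 1 := h1.symm
    have hd2 : 2 ≤ d := by omega
    have hfilt : ((Finset.univ : Finset (Fin 1)).powerset.filter
        (fun S : Finset (Fin 1) => S ≠ ∅ ∧ S ≠ Finset.univ)) = ∅ := by
      ext S
      simp only [Finset.mem_filter, Finset.mem_powerset, Finset.notMem_empty, iff_false,
        not_and]
      intro _ h1'
      rcases Finset.eq_empty_or_nonempty S with h | h
      · exact fun _ => h1' h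
      · intro _
        exact absurd (Finset.eq_univ_of_card S (by
          have h1c := Finset.card_le_univ S
          have h2c := Finset.card_pos.mpr h
          simp only [Finset.card_univ, Fintype.card_fin] at h1c ⊢
          omega)) (by assumption)
    rw [hfilt, Finset.sum_empty, mul_zero, mul_zero, zero_add]
    have hk0 : (Finset.univ : Finset (Fin 1)).erase 0 = ∅ := by
      apply Finset.card_eq_zero.mp
      rw [Finset.card_erase_of_mem (Finset.mem_univ 0)]
      simp
    have hα0 : α 0 = d := by
      rw [← hsum, Fin.sum_univ_one]
    rw [Fin.sum_univ_one, hk0, Finset.prod_empty, Pf_empty, hGt, hα0]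
    have hP1 : (∏ i : Fin 1, (α i : ℚ)^(α i - 1)) = ((d:ℚ))^(d-1) := by
      rw [Fin.prod_univ_one, hα0]
    rw [hP1]
    have hc1 : ((d + 1 - 2).factorial : ℚ) = ((d:ℚ) - 1) * ((d - 2).factorial : ℚ) := by
      rw [show d + 1 - 2 = d - 1 from by omega, fac_pred (d-1) (by omega),
        show d - 1 - 1 = d - 2 from by omega, Nat.cast_sub (by omega), Nat.cast_one]
    have hc2 : (d + 1 - 3) = d - 2 := by omega
    have hpw : ((d:ℚ))^(d-1) = ((d:ℚ))^(d-2) * (d:ℚ) := by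
      rw [← pow_succ]
      congr 1
      omega
    rw [hc1, hc2, hpw]
    have hfz : ((d-2).factorial : ℚ) ≠ 0 := by exact_mod_cast (Nat.factorial_pos _).ne'
    field_simp
    ring
  · -- n ≥ 2
    have hn2 : 2 ≤ n := h2
    have hd4 : 4 ≤ d + n := by omega
    -- Cayley split
    have csplit := Csplit (fun i => (α i : ℚ)) (Finset.univ : Finset (Fin n))
      (by rw [hcardu]; omega)
    have hcompl : ∀ S : Finset (Fin n), (Finset.univ : Finset (Fin n)) \ S = Sᶜ :=
      fun S => (Finset.compl_eq_univ_sdiff S).symm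
    rw [Finset.sum_congr rfl (fun S _ => by rw [hcompl S]), hcardu, haud] at csplit
    rw [csplit]
    -- second sum per k
    have hkstep : ∀ k : Fin n, ((((d + n - 3).factorial : ℚ)
            * (∏ l ∈ Finset.univ.erase k, (α l:ℚ)^(α l - 1))
            / (2 * (d:ℚ) * ∏ l, ((α l - 1).factorial : ℚ)))
          * Pf (fun i => (α i : ℚ)) ((α k : ℚ)) (Finset.univ.erase k)
          * (2*((α k:ℚ)-1)*(α k:ℚ)^(α k - 2)))
        = (((d + n - 3).factorial : ℚ) * (∏ i, (α i : ℚ)^(α i - 1)) * ((d:ℚ))^(n-2)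
            / ((d:ℚ) * ∏ l, ((α l - 1).factorial : ℚ))) * ((α k:ℚ) - 1) := by
      intro k
      have hEcard : (Finset.univ.erase k).card = n - 1 := by
        rw [Finset.card_erase_of_mem (Finset.mem_univ k), hcardu]
      have hEne : (Finset.univ.erase k) ≠ ∅ := by
        intro h
        rw [h, Finset.card_empty] at hEcard
        omega
      have hbase' : (α k:ℚ) + ∑ x ∈ Finset.univ.erase k, (α x:ℚ) = (d:ℚ) := by
        have hnat' : α k + ∑ x ∈ Finset.univ.erase k, α x = d := by
          rw [Finset.add_sum_erase _ α (Finset.mem_univ k), hsum]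
        exact_mod_cast congrArg (Nat.cast : ℕ → ℚ) hnat'
      have hPfE : Pf (fun i => (α i : ℚ)) ((α k : ℚ)) (Finset.univ.erase k)
          = (α k:ℚ) * ((d:ℚ))^(n-2) := by
        rw [Pf_of_ne _ _ hEne, hEcard, hbase', show n - 1 - 1 = n - 2 from by omega]
      have hprodk : (∏ l ∈ Finset.univ.erase k, (α l:ℚ)^(α l - 1)) * (α k:ℚ)^(α k - 1)
          = ∏ i, (α i : ℚ)^(α i - 1) := by
        rw [mul_comm]
        exact Finset.mul_prod_erase Finset.univ (fun l => (α l:ℚ)^(α l - 1))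
          (Finset.mem_univ k)
      have hpowk : ((α k:ℚ)-1) * ((α k:ℚ)^(α k - 2) * (α k:ℚ))
          = ((α k:ℚ)-1) * (α k:ℚ)^(α k - 1) := by
        rcases eq_or_lt_of_le (Nat.one_le_iff_ne_zero.mpr (Nat.pos_iff_ne_zero.mp (hpos k))) with hα1 | hα2
        · rw [← hα1]
          norm_num
        · congr 1
          rw [← pow_succ]
          congr 1
          omega
      rw [hPfE]
      rw [show (((d + n - 3).factorial : ℚ)
            * (∏ l ∈ Finset.univ.erase k, (α l:ℚ)^(α l - 1))
            / (2 * (d:ℚ) * ∏ l, ((α l - 1).factorial : ℚ)))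
          * ((α k:ℚ) * ((d:ℚ))^(n-2))
          * (2*((α k:ℚ)-1)*(α k:ℚ)^(α k - 2))
          = (((d + n - 3).factorial : ℚ)
            * ((∏ l ∈ Finset.univ.erase k, (α l:ℚ)^(α l - 1))
              * (((α k:ℚ)-1) * ((α k:ℚ)^(α k - 2) * (α k:ℚ))))
            * ((d:ℚ))^(n-2)
            / ((d:ℚ) * ∏ l, ((α l - 1).factorial : ℚ))) from by
        field_simp]
      rw [hpowk, show (∏ l ∈ Finset.univ.erase k, (α l:ℚ)^(α l - 1))
          * (((α k:ℚ)-1) * (α k:ℚ)^(α k - 1))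
          = ((∏ l ∈ Finset.univ.erase k, (α l:ℚ)^(α l - 1)) * (α k:ℚ)^(α k - 1))
            * ((α k:ℚ)-1) from by ring, hprodk]
      ring
    rw [Finset.sum_congr rfl (fun k _ => hkstep k), ← Finset.mul_sum]
    have hsumk : (∑ k : Fin n, ((α k:ℚ) - 1)) = (d:ℚ) - (n:ℚ) := by
      rw [Finset.sum_sub_distrib, haud, Finset.sum_const, hcardu, nsmul_eq_mul, mul_one]
    rw [hsumk, hGt, hr0α]
    -- numeric endgame
    have hf1 : ((d + n - 2).factorial : ℚ)
        = ((d:ℚ) + (n:ℚ) - 2) * ((d + n - 3).factorial : ℚ) := by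
      rw [fac_pred (d + n - 2) (by omega), show d + n - 2 - 1 = d + n - 3 from by omega,
        Nat.cast_sub (by omega : 2 ≤ d + n)]
      push_cast
      ring
    have hf2 : ((d + n - 3).factorial : ℚ)
        = ((d:ℚ) + (n:ℚ) - 3) * ((d + n - 4).factorial : ℚ) := by
      rw [fac_pred (d + n - 3) (by omega), show d + n - 3 - 1 = d + n - 4 from by omega,
        Nat.cast_sub (by omega : 3 ≤ d + n)]
      push_cast
      ring
    have hf3 : ((d + n - 2 : ℕ) : ℚ) = (d:ℚ) + (n:ℚ) - 2 := by
      rw [Nat.cast_sub (by omega : 2 ≤ d + n)]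
      push_cast
      ring
    have hf5 : ((d:ℚ))^(n-1) = ((d:ℚ))^(n-2) * (d:ℚ) := by
      rw [← pow_succ]
      congr 1
      omega
    rw [hf1, hf2, hf3, hf5]
    have hfz : ((d + n - 4).factorial : ℚ) ≠ 0 := by
      exact_mod_cast (Nat.factorial_pos _).ne'
    field_simp
    ring
end
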